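/- arXiv:1902.03810 — 5 statements merged into one kernel-verified Lean document; each statement's English description precedes it below -/
import Mathlib

section
/- For a fixed p ∈ (0, 0.5], if the density f of an absolutely continuous distribution F satisfies f(F⁻¹(p)) ∈ (0,∞) and f(F⁻¹(1−p)) ∈ (0,∞), then the theoretical p-left fence L(F,p) = (1/p)F⁻¹(p) − ((1−p)/p)F⁻¹(1−p) is increasing in p. -/
/-! Differentiating `L(p) = Q(p)/p − (1−p) Q(1−p)/p`, with `Q = F⁻¹` and `Q' = 1/f(Q)`, gives
`L'(p) = Q'(p)/p + (1−p) Q'(1−p)/p + (Q(1−p) − Q(p))/p²`. For `p ≤ 1/2` every term is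
nonnegative, since `Q` is increasing and `p ≤ 1 − p`, and the first is positive. -/

open Set Filter Topology

theorem StrictMono.continuousAt_of_eventually_rightInverse {α β : Type*} [LinearOrder α]
    [TopologicalSpace α] [OrderTopology α] [LinearOrder β] [TopologicalSpace β] [OrderTopology β]
    {F : α → β} {g : β → α} {q : β} (hF : StrictMono F) (hg : ∀ᶠ y in 𝓝 q, F (g y) = y) :
    ContinuousAt g q := by
  have hFgq : F (g q) = q := hg.self_of_nhds
  refine tendsto_order.2 ⟨fun a ha => ?_, fun b hb => ?_⟩
  · have hFa : F a < q := hFgq ▸ hF ha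
    filter_upwards [hg, Ioi_mem_nhds hFa] with y hy hay
    exact hF.lt_iff_lt.mp (hy.symm ▸ hay)
  · have hFb : q < F b := hFgq ▸ hF hb
    filter_upwards [hg, Iio_mem_nhds hFb] with y hy hyb
    exact hF.lt_iff_lt.mp (hy.symm ▸ hyb)

theorem StrictMono.hasDerivAt_of_eventually_rightInverse {F g : ℝ → ℝ} {q f' : ℝ}
    (hF : StrictMono F) (hg : ∀ᶠ y in 𝓝 q, F (g y) = y) (hF' : HasDerivAt F f' (g q))
    (hf' : f' ≠ 0) : HasDerivAt g f'⁻¹ q :=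
  hF'.of_local_left_inverse (hF.continuousAt_of_eventually_rightInverse hg) hf' hg

/-- The `p`-left fence `L(F, p)` of the quantile function `Q = F⁻¹`. -/
noncomputable def leftFence (Q : ℝ → ℝ) (p : ℝ) : ℝ := 1 / p * Q p - (1 - p) / p * Q (1 - p)

theorem hasDerivAt_leftFence {Q : ℝ → ℝ} {p a b : ℝ} (hp : p ≠ 0) (ha : HasDerivAt Q a p)
    (hb : HasDerivAt Q b (1 - p)) :
    HasDerivAt (leftFence Q) (a / p + (1 - p) * b / p + (Q (1 - p) - Q p) / p ^ 2) p := by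
  have hb' : HasDerivAt (fun x => Q (1 - x)) (b * -1) p :=
    hb.comp p ((hasDerivAt_id p).const_sub 1)
  have hinv := (hasDerivAt_const p (1 : ℝ)).div (hasDerivAt_id p) hp
  have hcoef := ((hasDerivAt_id p).const_sub 1).div (hasDerivAt_id p) hp
  refine ((hinv.mul ha).sub (hcoef.mul hb')).congr_deriv ?_
  simp only [id, Pi.div_apply]
  field_simp
  ring

theorem leftFence_strictMonoOn {Q : ℝ → ℝ} (hQ : MonotoneOn Q (Ioo 0 1))
    (hQ' : ∀ p ∈ Ioc (0 : ℝ) (1 / 2), ∃ a > 0, ∃ b ≥ 0, HasDerivAt Q a p ∧ HasDerivAt Q b (1 - p)) :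
    StrictMonoOn (leftFence Q) (Ioc 0 (1 / 2)) := by
  have hderiv : ∀ p ∈ Ioc (0 : ℝ) (1 / 2), ∃ d > 0, HasDerivAt (leftFence Q) d p := by
    rintro p ⟨hp0, hp⟩
    obtain ⟨a, ha, b, hb, hQa, hQb⟩ := hQ' p ⟨hp0, hp⟩
    have hQp : Q p ≤ Q (1 - p) :=
      hQ ⟨hp0, by linarith⟩ ⟨by linarith, by linarith⟩ (by linarith)
    refine ⟨_, ?_, hasDerivAt_leftFence hp0.ne' hQa hQb⟩
    have h1p : 0 ≤ 1 - p := by linarith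
    exact add_pos_of_pos_of_nonneg (add_pos_of_pos_of_nonneg (div_pos ha hp0)
      (div_nonneg (mul_nonneg h1p hb) hp0.le)) (div_nonneg (sub_nonneg.2 hQp) (sq_nonneg p))
  refine strictMonoOn_of_deriv_pos (convex_Ioc 0 (1 / 2)) (fun p hp => ?_) (fun p hp => ?_)
  · obtain ⟨d, -, hd⟩ := hderiv p hp
    exact hd.continuousAt.continuousWithinAt
  · rw [interior_Ioc] at hp
    obtain ⟨d, hd0, hd⟩ := hderiv p (Ioo_subset_Ioc_self hp)
    rwa [hd.deriv]

theorem left_fence_increasing_general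
    (F Finv f : ℝ → ℝ)
    (hFmono : StrictMono F)
    (hFinv : ∀ q ∈ Ioo (0:ℝ) 1, F (Finv q) = q)
    (hf : ∀ p ∈ Ioc (0:ℝ) (1/2),
      HasDerivAt F (f (Finv p)) (Finv p) ∧ 0 < f (Finv p) ∧
      HasDerivAt F (f (Finv (1 - p))) (Finv (1 - p)) ∧ 0 < f (Finv (1 - p))) :
    StrictMonoOn (fun p : ℝ => (1/p) * Finv p - ((1 - p)/p) * Finv (1 - p))
      (Ioc (0:ℝ) (1/2)) := by
  have hFinv_mono : MonotoneOn Finv (Ioo 0 1) := fun x hx y hy hxy =>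
    hFmono.le_iff_le.mp (by rwa [hFinv x hx, hFinv y hy])
  have hFinv_deriv : ∀ q ∈ Ioo (0 : ℝ) 1, HasDerivAt F (f (Finv q)) (Finv q) →
      0 < f (Finv q) → HasDerivAt Finv (f (Finv q))⁻¹ q := fun q hq hF' hpos =>
    hFmono.hasDerivAt_of_eventually_rightInverse
      (eventually_of_mem (Ioo_mem_nhds hq.1 hq.2) hFinv) hF' hpos.ne'
  refine leftFence_strictMonoOn hFinv_mono fun p hp => ?_
  obtain ⟨hFp, hfp, hFq, hfq⟩ := hf p hp
  exact ⟨_, inv_pos.2 hfp, _, (inv_pos.2 hfq).le,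
    hFinv_deriv p ⟨hp.1, by linarith [hp.2]⟩ hFp hfp,
    hFinv_deriv (1 - p) ⟨by linarith [hp.2], by linarith [hp.1]⟩ hFq hfq⟩

/-- For a fixed `p ∈ (0, 1/2]`, if the density `f` of an absolutely continuous
distribution `F` is positive and finite at the quantiles `F⁻¹(p)` and `F⁻¹(1-p)`,
then the theoretical `p`-left fence
`L(F,p) = (1/p)F⁻¹(p) − ((1−p)/p)F⁻¹(1−p)` is increasing in `p`. -/
theorem left_fence_increasing
    (F Finv f : ℝ → ℝ)
    (hFmono : StrictMono F) (hFcont : Continuous F)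
    (hFinv : ∀ q ∈ Ioo (0:ℝ) 1, F (Finv q) = q)
    (hf : ∀ p ∈ Ioc (0:ℝ) (1/2),
      HasDerivAt F (f (Finv p)) (Finv p) ∧ 0 < f (Finv p) ∧
      HasDerivAt F (f (Finv (1 - p))) (Finv (1 - p)) ∧ 0 < f (Finv (1 - p))) :
    StrictMonoOn (fun p : ℝ => (1/p) * Finv p - ((1 - p)/p) * Finv (1 - p))
      (Ioc (0:ℝ) (1/2)) :=
  left_fence_increasing_general F Finv f hFmono hFinv hf
end

section
/- For a fixed p ∈ (0, 0.5], if the density f of an absolutely continuous distribution F satisfies f(F⁻¹(p)) ∈ (0,∞) and f(F⁻¹(1−p)) ∈ (0,∞), then the theoretical p-right fence R(F,p) = (1/p)F⁻¹(1−p) − ((1−p)/p)F⁻¹(p) is decreasing in p. -/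
open Set

/-- For a fixed `p ∈ (0, 1/2]`, if the density `f` of an absolutely continuous
distribution `F` is positive and finite at the quantiles `F⁻¹(p)` and `F⁻¹(1-p)`,
then the theoretical `p`-right fence
`R(F,p) = (1/p)F⁻¹(1−p) − ((1−p)/p)F⁻¹(p)` is decreasing in `p`. -/
theorem right_fence_decreasing
    (F Finv f : ℝ → ℝ)
    (hFmono : StrictMono F) (hFcont : Continuous F)
    (hFinv : ∀ q ∈ Ioo (0:ℝ) 1, F (Finv q) = q)
    (hf : ∀ p ∈ Ioc (0:ℝ) (1/2),
      HasDerivAt F (f (Finv p)) (Finv p) ∧ 0 < f (Finv p) ∧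
      HasDerivAt F (f (Finv (1 - p))) (Finv (1 - p)) ∧ 0 < f (Finv (1 - p))) :
    StrictAntiOn (fun p : ℝ => (1/p) * Finv (1 - p) - ((1 - p)/p) * Finv p)
      (Ioc (0:ℝ) (1/2)) := by
  intro p hp q hq hpq
  obtain ⟨hp0, hp2⟩ := hp
  obtain ⟨hq0, hq2⟩ := hq
  have mono : ∀ x ∈ Ioo (0:ℝ) 1, ∀ y ∈ Ioo (0:ℝ) 1, x < y → Finv x < Finv y := by
    intro x hx y hy hxy
    have h : F (Finv x) < F (Finv y) := by
      rw [hFinv x hx, hFinv y hy]; exact hxy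
    exact hFmono.lt_iff_lt.mp h
  have hpm : p ∈ Ioo (0:ℝ) 1 := ⟨hp0, by linarith⟩
  have hqm : q ∈ Ioo (0:ℝ) 1 := ⟨hq0, by linarith⟩
  have h1qm : 1 - q ∈ Ioo (0:ℝ) 1 := ⟨by linarith, by linarith⟩
  have h1pm : 1 - p ∈ Ioo (0:ℝ) 1 := ⟨by linarith, by linarith⟩
  have hab : Finv p < Finv q := mono p hpm q hqm hpq
  have hbc : Finv q ≤ Finv (1 - q) := by
    rcases lt_or_eq_of_le (show q ≤ 1 - q by linarith) with h | h
    · exact le_of_lt (mono q hqm (1 - q) h1qm h)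
    · rw [← h]
  have hcd : Finv (1 - q) < Finv (1 - p) := mono (1 - q) h1qm (1 - p) h1pm (by linarith)
  simp only
  rw [div_mul_eq_mul_div, div_mul_eq_mul_div, div_mul_eq_mul_div, div_mul_eq_mul_div,
    div_sub_div_same, div_sub_div_same, div_lt_div_iff₀ hq0 hp0]
  nlinarith [mul_pos hq0 (sub_pos.2 hcd),
    mul_pos (mul_pos hq0 (show (0:ℝ) < 1 - p by linarith)) (sub_pos.2 hab),
    mul_nonneg (le_of_lt (sub_pos.2 hpq)) (sub_nonneg.2 hbc)]
end

section
/- For every p ∈ (0, 0.5] and every z ≥ 1, z^{1/p} ≥ (1/p)z − (1/p) + 1. Consequently, for an almost surely positive random variable X and a > 1, p_{R,p}(log_a X) ≤ p_{R,p}(X). -/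
/-! On the positive half-line `logb a` is increasing, so the quantiles of `log_a X` are the
logarithms of those of `X`, and `P(log_a X > t) = P(X > a ^ t)`. With `r = 1/p`,
`x₀ = F⁻¹(p)` and `x₁ = F⁻¹(1 - p)`, the right fence of `log_a X` therefore corresponds to the
geometric extrapolation `x₁ ^ r / x₀ ^ (r - 1)`, which dominates the linear extrapolation
`r x₁ - (r - 1) x₀` (the right fence of `X`) by Bernoulli's inequality `z ^ r ≥ 1 + r (z - 1)`
at `z = x₁ / x₀`. -/
open Set MeasureTheory

/-- Cumulative distribution function of a law `μ` on `ℝ`. -/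
noncomputable def cdf (μ : Measure ℝ) (x : ℝ) : ℝ := (μ (Iic x)).toReal

/-- Quantile (generalized inverse) function of `μ`. -/
noncomputable def quantile (μ : Measure ℝ) (q : ℝ) : ℝ := sInf {x : ℝ | q ≤ cdf μ x}

/-- Theoretical `p`-left fence of `μ`. -/
noncomputable def Lfence (μ : Measure ℝ) (p : ℝ) : ℝ :=
  (1/p) * quantile μ p - ((1 - p)/p) * quantile μ (1 - p)

/-- Theoretical `p`-right fence of `μ`. -/
noncomputable def Rfence (μ : Measure ℝ) (p : ℝ) : ℝ :=
  (1/p) * quantile μ (1 - p) - ((1 - p)/p) * quantile μ p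

/-- Probability of a left `p`-outside value. -/
noncomputable def pL (μ : Measure ℝ) (p : ℝ) : ℝ := (μ (Iio (Lfence μ p))).toReal

/-- Probability of a right `p`-outside value. -/
noncomputable def pR (μ : Measure ℝ) (p : ℝ) : ℝ := (μ (Ioi (Rfence μ p))).toReal

lemma mul_sub_add_one_le_rpow {r z : ℝ} (hr : 1 ≤ r) (hz : 0 ≤ z) : r * z - r + 1 ≤ z ^ r := by
  have h := one_add_mul_self_le_rpow_one_add (s := z - 1) (by linarith) hr
  rw [add_sub_cancel] at h
  linarith

lemma mul_sub_mul_le_rpow_div_rpow {r x y : ℝ} (hr : 1 ≤ r) (hx : 0 < x) (hy : 0 ≤ y) :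
    r * y - (r - 1) * x ≤ y ^ r / x ^ (r - 1) := by
  have hz := mul_sub_add_one_le_rpow hr (div_nonneg hy hx.le)
  calc r * y - (r - 1) * x = x * (r * (y / x) - r + 1) := by field_simp; ring
    _ ≤ x * (y / x) ^ r := by gcongr
    _ = y ^ r / x ^ (r - 1) := by
      rw [Real.div_rpow hy hx.le, Real.rpow_sub_one hx.ne']
      field_simp

lemma rpow_mul_logb_sub_mul_logb {a s t x y : ℝ} (ha : 0 < a) (ha' : a ≠ 1) (hx : 0 < x)
    (hy : 0 < y) : a ^ (s * Real.logb a x - t * Real.logb a y) = x ^ s / y ^ t := by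
  rw [Real.rpow_sub ha, mul_comm s, mul_comm t, Real.rpow_mul ha.le, Real.rpow_mul ha.le,
    Real.rpow_logb ha ha' hx, Real.rpow_logb ha ha' hy]

lemma cdf_eq_probabilityTheory_cdf (μ : Measure ℝ) [IsProbabilityMeasure μ] :
    cdf μ = ProbabilityTheory.cdf μ := by
  ext x
  rw [ProbabilityTheory.cdf_eq_real, Measure.real_def, cdf]

lemma quantile_le_iff_le_cdf {μ : Measure ℝ} [IsProbabilityMeasure μ] (hcont : Continuous (cdf μ))
    {q : ℝ} (hq : q ∈ Ioo (0 : ℝ) 1) (x : ℝ) : quantile μ q ≤ x ↔ q ≤ cdf μ x := by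
  have hne : {x : ℝ | q ≤ cdf μ x}.Nonempty := by
    rw [cdf_eq_probabilityTheory_cdf]
    obtain ⟨x, hx⟩ :=
      ((ProbabilityTheory.tendsto_cdf_atTop μ).eventually (eventually_gt_nhds hq.2)).exists
    exact ⟨x, hx.le⟩
  have hbdd : BddBelow {x : ℝ | q ≤ cdf μ x} := by
    rw [cdf_eq_probabilityTheory_cdf]
    obtain ⟨b, hb⟩ := Filter.eventually_atBot.1
      ((ProbabilityTheory.tendsto_cdf_atBot μ).eventually (eventually_lt_nhds hq.1))
    refine ⟨b, fun y hy => le_of_not_gt fun hyb => ?_⟩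
    exact (hb y hyb.le).not_ge hy
  have hmem : q ≤ cdf μ (quantile μ q) := (isClosed_le continuous_const hcont).csInf_mem hne hbdd
  have hmono : Monotone (cdf μ) := by
    rw [cdf_eq_probabilityTheory_cdf]; exact (ProbabilityTheory.cdf μ).mono
  exact ⟨fun h => hmem.trans (hmono h), fun h => csInf_le hbdd h⟩

lemma measurable_logb (a : ℝ) : Measurable (Real.logb a) :=
  Real.measurable_log.div_const _

section AlmostSurelyPositive

variable {μ : Measure ℝ} {a : ℝ}

lemma quantile_pos [IsProbabilityMeasure μ] (hμ : ∀ᵐ x ∂μ, 0 < x) (hcont : Continuous (cdf μ))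
    {q : ℝ} (hq : q ∈ Ioo (0 : ℝ) 1) : 0 < quantile μ q := by
  have h0 : cdf μ 0 = 0 := by
    rw [cdf, measure_mono_null (fun x hx => not_lt.2 (mem_Iic.1 hx)) (ae_iff.1 hμ),
      ENNReal.toReal_zero]
  rw [← not_le, quantile_le_iff_le_cdf hcont hq, h0, not_le]
  exact hq.1

lemma map_logb_apply_of_pos (hμ : ∀ᵐ x ∂μ, 0 < x) {s t : Set ℝ} (hs : MeasurableSet s)
    (hst : ∀ x, 0 < x → (Real.logb a x ∈ s ↔ x ∈ t)) : μ.map (Real.logb a) s = μ t := by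
  rw [Measure.map_apply (measurable_logb a) hs]
  exact measure_congr (Filter.eventuallyEq_set.2 (hμ.mono hst))

variable (hμ : ∀ᵐ x ∂μ, 0 < x) (ha : 1 < a)
include hμ ha

lemma cdf_map_logb (y : ℝ) : cdf (μ.map (Real.logb a)) y = cdf μ (a ^ y) := by
  rw [cdf, cdf, map_logb_apply_of_pos hμ measurableSet_Iic
    fun _ hx => Real.logb_le_iff_le_rpow ha hx]
  rfl

lemma map_logb_Ioi (y : ℝ) : μ.map (Real.logb a) (Ioi y) = μ (Ioi (a ^ y)) :=
  map_logb_apply_of_pos hμ measurableSet_Ioi fun _ hx => Real.lt_logb_iff_rpow_lt ha hx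

lemma quantile_map_logb [IsProbabilityMeasure μ] (hcont : Continuous (cdf μ)) {q : ℝ}
    (hq : q ∈ Ioo (0 : ℝ) 1) : quantile (μ.map (Real.logb a)) q = Real.logb a (quantile μ q) := by
  have : IsProbabilityMeasure (μ.map (Real.logb a)) :=
    Measure.isProbabilityMeasure_map (measurable_logb a).aemeasurable
  have hcdf : cdf (μ.map (Real.logb a)) = fun y => cdf μ (a ^ y) := funext (cdf_map_logb hμ ha)
  have hcont' : Continuous (cdf (μ.map (Real.logb a))) := by
    rw [hcdf]; exact hcont.comp (Real.continuous_const_rpow (by linarith))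
  refine eq_of_forall_ge_iff fun y => ?_
  rw [quantile_le_iff_le_cdf hcont' hq, hcdf, ← quantile_le_iff_le_cdf hcont hq,
    Real.logb_le_iff_le_rpow ha (quantile_pos hμ hcont hq)]

end AlmostSurelyPositive

theorem log_decreases_right_outside_prob_general
    (μ : Measure ℝ) [IsProbabilityMeasure μ]
    (hpos : μ (Ioi (0:ℝ)) = 1)
    (hcont : Continuous (cdf μ))
    (a : ℝ) (ha : 1 < a)
    (p : ℝ) (hp : p ∈ Ioc (0:ℝ) (1/2)) :
    (∀ z : ℝ, 1 ≤ z → (1/p) * z - 1/p + 1 ≤ z ^ (1/p)) ∧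
    pR (μ.map (fun x => Real.logb a x)) p ≤ pR μ p := by
  obtain ⟨hp0, hp2⟩ := hp
  have hr : 1 ≤ 1 / p := one_le_one_div hp0 (by linarith)
  refine ⟨fun z hz => mul_sub_add_one_le_rpow hr (by linarith), ?_⟩
  have hμ : ∀ᵐ x ∂μ, 0 < x := (mem_ae_iff_prob_eq_one measurableSet_Ioi).2 hpos
  have hq₀ : p ∈ Ioo (0 : ℝ) 1 := ⟨hp0, by linarith⟩
  have hq₁ : 1 - p ∈ Ioo (0 : ℝ) 1 := ⟨by linarith, by linarith⟩
  have hx₀ := quantile_pos hμ hcont hq₀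
  have hx₁ := quantile_pos hμ hcont hq₁
  have hfence : Rfence μ p ≤ a ^ Rfence (μ.map (Real.logb a)) p := by
    have hexp : (1 - p) / p = 1 / p - 1 := by field_simp
    rw [Rfence, Rfence, quantile_map_logb hμ ha hcont hq₀, quantile_map_logb hμ ha hcont hq₁,
      rpow_mul_logb_sub_mul_logb (by linarith) ha.ne' hx₁ hx₀, hexp]
    exact mul_sub_mul_le_rpow_div_rpow hr hx₀ hx₁.le
  rw [pR, pR, map_logb_Ioi hμ ha]
  exact ENNReal.toReal_mono (measure_ne_top μ _) (measure_mono (Ioi_subset_Ioi hfence))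

/-- For every `p ∈ (0, 1/2]` and `z ≥ 1`, `z^(1/p) ≥ (1/p)z − 1/p + 1`.
Consequently, for an a.s. positive `X` and base `a > 1`,
`p_{R,p}(log_a X) ≤ p_{R,p}(X)`. -/
theorem log_decreases_right_outside_prob
    (μ : Measure ℝ) [IsProbabilityMeasure μ] (hac : μ ≪ volume)
    (hpos : μ (Ioi (0:ℝ)) = 1)
    (hcont : Continuous (cdf μ)) (hsm : StrictMonoOn (cdf μ) (Ioi (0:ℝ)))
    (a : ℝ) (ha : 1 < a)
    (p : ℝ) (hp : p ∈ Ioc (0:ℝ) (1/2)) :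
    (∀ z : ℝ, 1 ≤ z → (1/p) * z - 1/p + 1 ≤ z ^ (1/p)) ∧
    pR (μ.map (fun x => Real.logb a x)) p ≤ pR μ p :=
  log_decreases_right_outside_prob_general μ hpos hcont a ha p hp
end

section
/- For α > 1, p ∈ (0, 0.5], and z ≥ 1, the function t(z) = 1/p − ((1−p)/p)z^α − ((1/p) − ((1−p)/p)z)^α satisfies t(z) ≤ 0, i.e., ((1/p) − ((1−p)/p)z)^α ≥ 1/p − ((1−p)/p)z^α, provided (1/p) − ((1−p)/p)z ≥ 0. -/
open Set

/-!
Writing `q = (1 - p)/p ≥ 0`, we have `1/p = 1 + q` and `w + q z = 1 + q` for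
`w = 1/p - q z`. Summing the tangent-line bounds `x ^ α ≥ 1 + α (x - 1)` at `x = w` (weight `1`)
and `x = z` (weight `q`), the first-order terms cancel and `w ^ α + q z ^ α ≥ 1 + q`.
-/

theorem one_add_mul_sub_one_le_rpow {x α : ℝ} (hx : 0 ≤ x) (hα : 1 ≤ α) :
    1 + α * (x - 1) ≤ x ^ α := by
  simpa using one_add_mul_self_le_rpow_one_add (by linarith : -1 ≤ x - 1) hα

theorem add_le_mul_rpow_add_mul_rpow {a b x y α : ℝ} (ha : 0 ≤ a) (hb : 0 ≤ b)
    (hx : 0 ≤ x) (hy : 0 ≤ y) (hα : 1 ≤ α) (hxy : a * x + b * y = a + b) :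
    a + b ≤ a * x ^ α + b * y ^ α := by
  have hx' := mul_le_mul_of_nonneg_left (one_add_mul_sub_one_le_rpow hx hα) ha
  have hy' := mul_le_mul_of_nonneg_left (one_add_mul_sub_one_le_rpow hy hα) hb
  linear_combination hx' + hy' - α * hxy

/-- For `α > 1`, `p ∈ (0, 1/2]`, and `z ≥ 1` with `(1/p) − ((1−p)/p)z ≥ 0`, one has
`((1/p) − ((1−p)/p)z)^α ≥ 1/p − ((1−p)/p)z^α`, i.e. `t(z) ≤ 0`. -/
theorem power_key_inequality
    (α p z : ℝ) (hα : 1 < α) (hp : p ∈ Ioc (0:ℝ) (1/2)) (hz : 1 ≤ z)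
    (hnonneg : 0 ≤ (1/p) - ((1 - p)/p) * z) :
    1/p - ((1 - p)/p) * z ^ α - ((1/p) - ((1 - p)/p) * z) ^ α ≤ 0 := by
  obtain ⟨hp0, hp2⟩ := hp
  have hq : 0 ≤ (1 - p) / p := div_nonneg (by linarith) hp0.le
  have hsplit : 1 / p = 1 + (1 - p) / p := by field_simp; ring
  have key := add_le_mul_rpow_add_mul_rpow zero_le_one hq hnonneg (zero_le_one.trans hz) hα.le
    (by rw [hsplit]; ring)
  rw [← hsplit] at key
  linarith
end

section
/- Let X be standard exponentially distributed (c.d.f. F(x) = 1 − e^{−x} for x ≥ 0). For p ∈ (0, 0.5], the probability for a right p-outside value equals p_{R,p}(X) = (1−p)·(p/(1−p))^{1/p}. In particular p_{R,0.25}(X) = 1/108. -/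
/-! For `p ≤ 1/2` the fence `R` is nonnegative, so `P(X > R) = e^{-R}`; writing
`-R = log (1 - p) + (log p - log (1 - p)) / p` gives `e^{-R} = (1 - p) (p / (1 - p))^{1/p}`. -/

open Set MeasureTheory Real

/-- `R(X, p)` for the standard exponential law, with `F⁻¹(1 - p) = -log p` and
`F⁻¹(p) = -log (1 - p)`. -/
noncomputable def expRightFence (p : ℝ) : ℝ :=
  (1 / p) * (-log p) - ((1 - p) / p) * (-log (1 - p))

lemma expRightFence_nonneg {p : ℝ} (hp : p ∈ Ioc (0 : ℝ) (1 / 2)) : 0 ≤ expRightFence p := by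
  obtain ⟨hp0, hp2⟩ := hp
  have h1p : 0 < 1 - p := by linarith
  -- `log p ≤ -p` from `1 - p ≤ exp (-p)` and `p ≤ 1 - p`
  have hlog_p : log p ≤ -p := by
    rw [log_le_iff_le_exp hp0]
    linarith [add_one_le_exp (-p)]
  have hlog_one_sub : -p ≤ (1 - p) * log (1 - p) := by
    have h := mul_le_mul_of_nonneg_left (one_sub_inv_le_log_of_pos h1p) h1p.le
    rwa [mul_one_sub, mul_inv_cancel₀ h1p.ne', sub_sub_cancel_left] at h
  have hfence : expRightFence p = (-log p + (1 - p) * log (1 - p)) / p := by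
    unfold expRightFence
    field_simp
    ring
  rw [hfence]
  exact div_nonneg (by linarith) hp0.le

lemma exp_neg_expRightFence {p : ℝ} (hp0 : 0 < p) (hp1 : p < 1) :
    exp (-expRightFence p) = (1 - p) * (p / (1 - p)) ^ (1 / p) := by
  have h1p : 0 < 1 - p := by linarith
  rw [rpow_def_of_pos (div_pos hp0 h1p), log_div hp0.ne' h1p.ne', ← exp_log h1p, ← exp_add,
    log_exp]
  congr 1
  unfold expRightFence
  field_simp
  ring

lemma measureReal_Ioi_eq_one_sub {μ : Measure ℝ} [IsProbabilityMeasure μ] (x : ℝ) :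
    μ.real (Ioi x) = 1 - μ.real (Iic x) := by
  rw [← compl_Iic, probReal_compl_eq_one_sub measurableSet_Iic]

lemma measureReal_Ioi_of_exponential_cdf {μ : Measure ℝ} [IsProbabilityMeasure μ]
    (hF : ∀ x : ℝ, (μ (Iic x)).toReal = if 0 ≤ x then 1 - exp (-x) else 0)
    {x : ℝ} (hx : 0 ≤ x) : μ.real (Ioi x) = exp (-x) := by
  rw [measureReal_Ioi_eq_one_sub, measureReal_def, hF x, if_pos hx, sub_sub_cancel]

lemma measureReal_Ioi_expRightFence {μ : Measure ℝ} [IsProbabilityMeasure μ]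
    (hF : ∀ x : ℝ, (μ (Iic x)).toReal = if 0 ≤ x then 1 - exp (-x) else 0)
    {p : ℝ} (hp : p ∈ Ioc (0 : ℝ) (1 / 2)) :
    μ.real (Ioi (expRightFence p)) = (1 - p) * (p / (1 - p)) ^ (1 / p) := by
  rw [measureReal_Ioi_of_exponential_cdf hF (expRightFence_nonneg hp),
    exp_neg_expRightFence hp.1 (by linarith [hp.2])]

/-- For a standard exponential random variable (c.d.f. `F(x) = 1 − e^{−x}`, quantile
`F⁻¹(q) = −log(1−q)`), for every `p ∈ (0, 1/2]` the probability of a right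
`p`-outside value equals `(1−p)·(p/(1−p))^{1/p}`; in particular it equals
`1/108` for `p = 1/4`. -/
theorem exponential_right_outside_prob
    (μ : Measure ℝ) [IsProbabilityMeasure μ]
    (hF : ∀ x : ℝ, (μ (Iic x)).toReal = if 0 ≤ x then 1 - Real.exp (-x) else 0)
    (p : ℝ) (hp : p ∈ Ioc (0:ℝ) (1/2)) :
    (μ (Ioi ((1/p) * (-Real.log p) - ((1 - p)/p) * (-Real.log (1 - p))))).toReal
      = (1 - p) * (p / (1 - p)) ^ (1/p) ∧
    (μ (Ioi ((1/(1/4:ℝ)) * (-Real.log (1/4))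
        - ((1 - (1/4:ℝ))/(1/4)) * (-Real.log (1 - (1/4:ℝ)))))).toReal = 1/108 := by
  refine ⟨measureReal_Ioi_expRightFence hF hp, ?_⟩
  rw [← measureReal_def, ← expRightFence, measureReal_Ioi_expRightFence hF (by norm_num),
    show (1 : ℝ) / (1 / 4) = (4 : ℕ) by norm_num, rpow_natCast]
  norm_num
end
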